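/- arXiv:1301.3917 — 5 statements merged into one kernel-verified Lean document; each statement's English description precedes it below -/
import Mathlib

section
/- The algebraic degree of the n-th iterate of a Hénon type map f of algebraic degree d equals dⁿ for every n ≥ 0. -/
/-!
Track two facts about `F = f^[n]`: it is a polynomial map of degree at most `D = dⁿ`, and on
the axis `z₂ = 0` it is `t ↦ (u t, v t)` with `deg u = D > deg v`. Composing with a Hénon map
`(z₁, z₂) ↦ (p z₁ + a z₂, z₁)` of degree `k ≥ 2` gives the axis data `(p ∘ u + a v, u)`, whose
first entry has degree exactly `kD` because `deg v < D < kD`; so both facts pass to degree `kD`.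
The restriction of `P` to the axis has degree at most `deg P`, hence `deg P ≥ D`.
-/

open MvPolynomial

/-- The Hénon map `h(z₁,z₂) = (p(z₁) + a z₂, z₁)`. -/
noncomputable def henon (p : Polynomial ℂ) (a : ℂ) : ℂ × ℂ → ℂ × ℂ :=
  fun z => (p.eval z.1 + a * z.2, z.1)

/-- The Hénon type map `f = h₁ ∘ ⋯ ∘ hₘ`, a composition of Hénon maps. -/
noncomputable def henonComp {m : ℕ} (p : Fin m → Polynomial ℂ) (a : Fin m → ℂ) :
    ℂ × ℂ → ℂ × ℂ :=
  (List.ofFn fun i => henon (p i) (a i)).foldr (· ∘ ·) id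

open scoped Polynomial

namespace MvPolynomial

variable {σ R : Type*} [CommSemiring R]

theorem eval_polynomial_aeval (v : σ → R) (P : MvPolynomial σ R) (q : R[X]) :
    eval v (Polynomial.aeval P q) = q.eval (eval v P) :=
  (Polynomial.aeval_algHom_apply (aeval v) P q).symm

theorem polynomial_eval_aeval (f : σ → R[X]) (P : MvPolynomial σ R) (t : R) :
    (aeval f P).eval t = eval (fun i => (f i).eval t) P := by
  rw [← Polynomial.coe_aeval_eq_eval, comp_aeval_apply]
  rfl

theorem totalDegree_polynomial_aeval_le (P : MvPolynomial σ R) (q : R[X]) :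
    (Polynomial.aeval P q).totalDegree ≤ q.natDegree * P.totalDegree := by
  rw [Polynomial.aeval_eq_sum_range]
  refine totalDegree_finsetSum_le fun i hi => ?_
  refine (totalDegree_smul_le _ _).trans ((totalDegree_pow _ _).trans ?_)
  exact Nat.mul_le_mul_right _ (Nat.lt_succ_iff.mp (Finset.mem_range.mp hi))

theorem natDegree_aeval_le_totalDegree {f : σ → R[X]} (hf : ∀ i, (f i).natDegree ≤ 1)
    (P : MvPolynomial σ R) : (aeval f P).natDegree ≤ P.totalDegree := by
  conv_lhs => rw [P.as_sum, map_sum]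
  refine Polynomial.natDegree_sum_le_of_forall_le _ _ fun s hs => ?_
  rw [aeval_monomial, ← Polynomial.C_eq_algebraMap]
  refine (Polynomial.natDegree_C_mul_le _ _).trans (le_trans ?_ (le_totalDegree hs))
  refine (Polynomial.natDegree_prod_le _ _).trans (Finset.sum_le_sum fun i _ => ?_)
  refine Polynomial.natDegree_pow_le.trans ?_
  simpa using Nat.mul_le_mul_left (s i) (hf i)

theorem natDegree_le_totalDegree_of_eval_axis {K : Type*} [CommRing K] [IsDomain K] [Infinite K]
    {P : MvPolynomial (Fin 2) K} {u : K[X]} (h : ∀ t, eval ![t, 0] P = u.eval t) :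
    u.natDegree ≤ P.totalDegree := by
  have hu : aeval ![Polynomial.X, 0] P = u := Polynomial.funext fun t => by
    rw [polynomial_eval_aeval, ← h]
    congr
    funext i
    fin_cases i <;> simp
  exact hu ▸ natDegree_aeval_le_totalDegree (fun i => by fin_cases i <;> simp) P

end MvPolynomial

def IsPolynomialMapOfDegreeLE (F : ℂ × ℂ → ℂ × ℂ) (D : ℕ) : Prop :=
  ∃ P Q : MvPolynomial (Fin 2) ℂ,
    (∀ z : ℂ × ℂ, F z = (eval ![z.1, z.2] P, eval ![z.1, z.2] Q)) ∧
    P.totalDegree ≤ D ∧ Q.totalDegree ≤ D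

def HasDominantAxisDegree (F : ℂ × ℂ → ℂ × ℂ) (D : ℕ) : Prop :=
  ∃ u v : ℂ[X], (∀ t : ℂ, F (t, 0) = (u.eval t, v.eval t)) ∧ u.natDegree = D ∧ v.natDegree < D

theorem isPolynomialMapOfDegreeLE_id : IsPolynomialMapOfDegreeLE id 1 :=
  ⟨X 0, X 1, fun z => by simp, by simp [totalDegree_X], by simp [totalDegree_X]⟩

theorem IsPolynomialMapOfDegreeLE.henon_comp {F : ℂ × ℂ → ℂ × ℂ} {D : ℕ}
    (hF : IsPolynomialMapOfDegreeLE F D) {q : ℂ[X]} (hq : 1 ≤ q.natDegree) (b : ℂ) :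
    IsPolynomialMapOfDegreeLE (henon q b ∘ F) (q.natDegree * D) := by
  obtain ⟨P, Q, hPQ, hP, hQ⟩ := hF
  have hD : D ≤ q.natDegree * D := Nat.le_mul_of_pos_left D hq
  refine ⟨Polynomial.aeval P q + C b * Q, P, fun z => ?_, ?_, hP.trans hD⟩
  · simp [henon, hPQ z, eval_polynomial_aeval]
  · refine (totalDegree_add _ _).trans (max_le ?_ ?_)
    · exact (totalDegree_polynomial_aeval_le P q).trans (Nat.mul_le_mul_left _ hP)
    · refine (totalDegree_mul _ _).trans ?_
      simpa [totalDegree_C] using hQ.trans hD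

theorem hasDominantAxisDegree_id : HasDominantAxisDegree id 1 :=
  ⟨Polynomial.X, 0, fun t => by simp, by simp, by simp⟩

theorem HasDominantAxisDegree.henon_comp {F : ℂ × ℂ → ℂ × ℂ} {D : ℕ}
    (hF : HasDominantAxisDegree F D) {q : ℂ[X]} (hq : 2 ≤ q.natDegree) (b : ℂ) :
    HasDominantAxisDegree (henon q b ∘ F) (q.natDegree * D) := by
  obtain ⟨u, v, huv, hu, hv⟩ := hF
  have hD : D < q.natDegree * D := lt_mul_left (by omega) (by omega)
  have hqu : (q.comp u).natDegree = q.natDegree * D := by rw [Polynomial.natDegree_comp, hu]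
  have hlt : (Polynomial.C b * v).natDegree < (q.comp u).natDegree :=
    hqu ▸ (Polynomial.natDegree_C_mul_le _ _).trans_lt (hv.trans hD)
  refine ⟨q.comp u + Polynomial.C b * v, u, fun t => ?_, ?_, hu ▸ hD⟩
  · simp [henon, huv t, Polynomial.eval_comp]
  · rw [Polynomial.natDegree_add_eq_left_of_natDegree_lt hlt, hqu]

theorem henonComp_succ {m : ℕ} (p : Fin (m + 1) → ℂ[X]) (a : Fin (m + 1) → ℂ) :
    henonComp p a = henon (p 0) (a 0) ∘ henonComp (fun i => p i.succ) (fun i => a i.succ) := by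
  simp [henonComp, List.ofFn_succ]

theorem henonComp_comp_induction {S : (ℂ × ℂ → ℂ × ℂ) → ℕ → Prop}
    (hS : ∀ (q : ℂ[X]) (b : ℂ) (F : ℂ × ℂ → ℂ × ℂ) (D : ℕ),
      2 ≤ q.natDegree → S F D → S (henon q b ∘ F) (q.natDegree * D))
    {m : ℕ} (p : Fin m → ℂ[X]) (a : Fin m → ℂ) (hdeg : ∀ i, 2 ≤ (p i).natDegree)
    {F : ℂ × ℂ → ℂ × ℂ} {D : ℕ} (hF : S F D) :
    S (henonComp p a ∘ F) ((∏ i, (p i).natDegree) * D) := by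
  induction m generalizing F D with
  | zero => simpa [henonComp] using hF
  | succ m ih =>
    rw [henonComp_succ, Fin.prod_univ_succ, mul_assoc, Function.comp_assoc]
    exact hS _ _ _ _ (hdeg 0) (ih _ _ (fun i => hdeg i.succ) hF)

theorem iterate_henonComp_induction {S : (ℂ × ℂ → ℂ × ℂ) → ℕ → Prop}
    (hS : ∀ (q : ℂ[X]) (b : ℂ) (F : ℂ × ℂ → ℂ × ℂ) (D : ℕ),
      2 ≤ q.natDegree → S F D → S (henon q b ∘ F) (q.natDegree * D))
    {m : ℕ} (p : Fin m → ℂ[X]) (a : Fin m → ℂ) (hdeg : ∀ i, 2 ≤ (p i).natDegree)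
    (h₁ : S id 1) (n : ℕ) : S (henonComp p a)^[n] ((∏ i, (p i).natDegree) ^ n) := by
  induction n with
  | zero => simpa using h₁
  | succ n ih =>
    rw [Function.iterate_succ', pow_succ']
    exact henonComp_comp_induction hS p a hdeg ih

theorem algebraic_degree_iterate_general (m : ℕ) (p : Fin (m + 1) → Polynomial ℂ)
    (a : Fin (m + 1) → ℂ) (hdeg : ∀ i, 2 ≤ (p i).natDegree) :
    ∀ n : ℕ, ∃ P Q : MvPolynomial (Fin 2) ℂ,
      (∀ z : ℂ × ℂ,
        (henonComp p a)^[n] z = (eval ![z.1, z.2] P, eval ![z.1, z.2] Q)) ∧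
      max P.totalDegree Q.totalDegree = (∏ i, (p i).natDegree) ^ n := by
  intro n
  obtain ⟨P, Q, hPQ, hP, hQ⟩ := iterate_henonComp_induction
    (fun _ b _ _ hq hF => hF.henon_comp (by omega) b) p a hdeg isPolynomialMapOfDegreeLE_id n
  obtain ⟨u, v, hu_axis, hu, -⟩ := iterate_henonComp_induction
    (fun _ b _ _ hq hF => hF.henon_comp hq b) p a hdeg hasDominantAxisDegree_id n
  have hPu : ∀ t, eval ![t, 0] P = u.eval t := fun t => by
    simpa using congrArg Prod.fst ((hPQ (t, 0)).symm.trans (hu_axis t))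
  refine ⟨P, Q, hPQ, le_antisymm (max_le hP hQ) ?_⟩
  exact hu ▸ (natDegree_le_totalDegree_of_eval_axis hPu).trans (le_max_left _ _)

/-- The algebraic degree of the `n`-th iterate of a Hénon type map `f` of algebraic
degree `d = ∏ deg pᵢ` equals `dⁿ` for every `n ≥ 0`: the iterate is a polynomial map
`(P, Q)` with `max (deg P) (deg Q) = dⁿ`. -/
theorem algebraic_degree_iterate (m : ℕ) (p : Fin (m + 1) → Polynomial ℂ)
    (a : Fin (m + 1) → ℂ) (hdeg : ∀ i, 2 ≤ (p i).natDegree) (ha : ∀ i, a i ≠ 0) :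
    ∀ n : ℕ, ∃ P Q : MvPolynomial (Fin 2) ℂ,
      (∀ z : ℂ × ℂ,
        (henonComp p a)^[n] z = (eval ![z.1, z.2] P, eval ![z.1, z.2] Q)) ∧
      max P.totalDegree Q.totalDegree = (∏ i, (p i).natDegree) ^ n :=
  algebraic_degree_iterate_general m p a hdeg
end

section
/- Let X be a metric space of finite diameter, Λ : X → X a Lipschitz map with dist(Λ(a),Λ(b)) ≤ A·dist(a,b) for some A > 1, and v : X → ℝ a bounded Lipschitz function. Then for any d > 1 the series ∑_{n≥0} d⁻ⁿ · v ∘ Λⁿ converges pointwise to a function which is β-Hölder continuous for every β with 0 ≤ β ≤ 1 and β < log d / log A. -/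
/-!
The `n`-th term of `u x - u y` is at most `d⁻ⁿ · min (2 C) (L Aⁿ dist x y)`, using boundedness
for the first entry and the Lipschitz bounds for the second. Interpolating
`min a b ≤ a ^ (1 - β) * b ^ β` turns this into `K · (A ^ β / d) ^ n · dist x y ^ β`, and
`β < log d / log A` says exactly that the ratio `A ^ β / d` is less than `1`.
-/

open Real

lemma min_le_rpow_mul_rpow {a b β : ℝ} (ha : 0 ≤ a) (hb : 0 ≤ b) (hβ0 : 0 ≤ β) (hβ1 : β ≤ 1) :
    min a b ≤ a ^ (1 - β) * b ^ β := by
  have hm : 0 ≤ min a b := le_min ha hb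
  calc min a b = min a b ^ (1 - β) * min a b ^ β := by
        rw [← rpow_add' hm (by norm_num), sub_add_cancel, rpow_one]
    _ ≤ a ^ (1 - β) * b ^ β := by
        gcongr
        exacts [min_le_left a b, min_le_right a b]

lemma abs_sub_le_rpow_of_bounded_of_lipschitz {X : Type*} [PseudoMetricSpace X] {v : X → ℝ}
    {C L β : ℝ} (hC : ∀ x, |v x| ≤ C) (hL0 : 0 ≤ L) (hL : ∀ x y, |v x - v y| ≤ L * dist x y)
    (hβ0 : 0 ≤ β) (hβ1 : β ≤ 1) (x y : X) :
    |v x - v y| ≤ (2 * C) ^ (1 - β) * L ^ β * dist x y ^ β := by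
  have hbounded : |v x - v y| ≤ 2 * C := by linarith [abs_sub (v x) (v y), hC x, hC y]
  calc |v x - v y| ≤ min (2 * C) (L * dist x y) := le_min hbounded (hL x y)
    _ ≤ (2 * C) ^ (1 - β) * (L * dist x y) ^ β :=
        min_le_rpow_mul_rpow ((abs_nonneg _).trans hbounded) (by positivity) hβ0 hβ1
    _ = (2 * C) ^ (1 - β) * L ^ β * dist x y ^ β := by
        rw [mul_rpow hL0 dist_nonneg, mul_assoc]

lemma dist_iterate_le_pow_mul {X : Type*} [PseudoMetricSpace X] {Λ : X → X} {A : ℝ}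
    (hA : 0 ≤ A) (hΛ : ∀ a b, dist (Λ a) (Λ b) ≤ A * dist a b) (n : ℕ) (x y : X) :
    dist (Λ^[n] x) (Λ^[n] y) ≤ A ^ n * dist x y := by
  induction n generalizing x y with
  | zero => simp
  | succ n ih =>
    rw [Function.iterate_succ_apply, Function.iterate_succ_apply, pow_succ, mul_assoc]
    exact ih _ _ |>.trans (mul_le_mul_of_nonneg_left (hΛ x y) (by positivity))

lemma abs_sub_iterate_le_rpow {X : Type*} [PseudoMetricSpace X] {Λ : X → X} {A : ℝ}
    (hA : 0 ≤ A) (hΛ : ∀ a b, dist (Λ a) (Λ b) ≤ A * dist a b) {v : X → ℝ} {C L β : ℝ}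
    (hC : ∀ x, |v x| ≤ C) (hL0 : 0 ≤ L) (hL : ∀ x y, |v x - v y| ≤ L * dist x y)
    (hβ0 : 0 ≤ β) (hβ1 : β ≤ 1) (n : ℕ) (x y : X) :
    |v (Λ^[n] x) - v (Λ^[n] y)| ≤ (2 * C) ^ (1 - β) * L ^ β * dist x y ^ β * (A ^ β) ^ n := by
  have hLip (x y : X) : |v (Λ^[n] x) - v (Λ^[n] y)| ≤ L * A ^ n * dist x y := by
    rw [mul_assoc]
    exact (hL _ _).trans (mul_le_mul_of_nonneg_left (dist_iterate_le_pow_mul hA hΛ n x y) hL0)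
  calc |v (Λ^[n] x) - v (Λ^[n] y)|
      ≤ (2 * C) ^ (1 - β) * (L * A ^ n) ^ β * dist x y ^ β :=
        abs_sub_le_rpow_of_bounded_of_lipschitz (v := fun z => v (Λ^[n] z)) (fun _ => hC _)
          (by positivity) hLip hβ0 hβ1 x y
    _ = (2 * C) ^ (1 - β) * L ^ β * dist x y ^ β * (A ^ β) ^ n := by
        rw [mul_rpow hL0 (by positivity), ← rpow_pow_comm hA]
        ring

lemma summable_inv_pow_mul_of_abs_le {w : ℕ → ℝ} {C d : ℝ} (hd : 1 < d) (hw : ∀ n, |w n| ≤ C) :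
    Summable fun n => (d ^ n)⁻¹ * w n := by
  have hd0 : 0 < d := zero_lt_one.trans hd
  refine .of_norm_bounded ((summable_geometric_of_lt_one (by positivity)
    (inv_lt_one_of_one_lt₀ hd)).mul_left C) fun n => ?_
  rw [norm_mul, norm_inv, norm_pow, norm_of_nonneg hd0.le, norm_eq_abs, inv_pow, mul_comm]
  exact mul_le_mul_of_nonneg_right (hw n) (by positivity)

lemma abs_sub_le_of_hasSum_of_geometric {f g : ℕ → ℝ} {s t c ρ : ℝ} (hf : HasSum f s)
    (hg : HasSum g t) (hρ0 : 0 ≤ ρ) (hρ1 : ρ < 1) (h : ∀ n, |f n - g n| ≤ c * ρ ^ n) :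
    |s - t| ≤ c * (1 - ρ)⁻¹ :=
  (hf.sub hg).norm_le_of_bounded ((hasSum_geometric_of_lt_one hρ0 hρ1).mul_left c) h

theorem holder_series_general {X : Type*} [MetricSpace X]
    (Λ : X → X) (A : ℝ) (hA : 1 < A)
    (hΛ : ∀ a b : X, dist (Λ a) (Λ b) ≤ A * dist a b)
    (v : X → ℝ) (Cv L : ℝ)
    (hv : ∀ x, |v x| ≤ Cv)
    (hL : ∀ x y, |v x - v y| ≤ L * dist x y)
    (d : ℝ) (hd : 1 < d) :
    ∃ u : X → ℝ,
      (∀ x, HasSum (fun n : ℕ => (d ^ n)⁻¹ * v (Λ^[n] x)) (u x)) ∧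
      ∀ β : ℝ, 0 ≤ β → β ≤ 1 → β < Real.log d / Real.log A →
        ∃ C : ℝ, ∀ x y, |u x - u y| ≤ C * dist x y ^ β := by
  have hd0 : 0 < d := zero_lt_one.trans hd
  have hA0 : 0 < A := zero_lt_one.trans hA
  have hsum (x : X) : Summable fun n : ℕ => (d ^ n)⁻¹ * v (Λ^[n] x) :=
    summable_inv_pow_mul_of_abs_le hd fun _ => hv _
  refine ⟨fun x => ∑' n, (d ^ n)⁻¹ * v (Λ^[n] x), fun x => (hsum x).hasSum,
    fun β hβ0 hβ1 hβ => ?_⟩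
  have hρ1 : A ^ β / d < 1 := by
    rw [div_lt_one hd0, rpow_lt_iff_lt_log hA0 hd0]
    exact (lt_div_iff₀ (log_pos hA)).mp hβ
  set K := (2 * Cv) ^ (1 - β) * max L 0 ^ β
  refine ⟨K * (1 - A ^ β / d)⁻¹, fun x y => ?_⟩
  have hterm (n : ℕ) : |(d ^ n)⁻¹ * v (Λ^[n] x) - (d ^ n)⁻¹ * v (Λ^[n] y)|
      ≤ K * dist x y ^ β * (A ^ β / d) ^ n := by
    have hL' (x y : X) : |v x - v y| ≤ max L 0 * dist x y :=
      (hL x y).trans (mul_le_mul_of_nonneg_right (le_max_left L 0) dist_nonneg)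
    rw [← mul_sub, abs_mul, abs_of_pos (by positivity)]
    calc (d ^ n)⁻¹ * |v (Λ^[n] x) - v (Λ^[n] y)|
        ≤ (d ^ n)⁻¹ * (K * dist x y ^ β * (A ^ β) ^ n) := by
          gcongr
          exact abs_sub_iterate_le_rpow hA0.le hΛ hv (le_max_right L 0) hL' hβ0 hβ1 n x y
      _ = K * dist x y ^ β * (A ^ β / d) ^ n := by
          rw [div_pow]
          ring
  exact (abs_sub_le_of_hasSum_of_geometric (hsum x).hasSum (hsum y).hasSum
    (by positivity) hρ1 hterm).trans_eq (by ring)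

/-- Let `X` be a metric space of finite diameter, `Λ : X → X` with
`dist (Λ a) (Λ b) ≤ A · dist a b` for some `A > 1`, and `v` a bounded Lipschitz
function on `X`. Then for any `d > 1` the series `∑_{n ≥ 0} d⁻ⁿ v ∘ Λⁿ` converges
pointwise to a function which is `β`-Hölder continuous for every `β` with
`0 ≤ β ≤ 1` and `β < log d / log A`. -/
theorem holder_series {X : Type*} [MetricSpace X]
    (D : ℝ) (hD : ∀ x y : X, dist x y ≤ D)
    (Λ : X → X) (A : ℝ) (hA : 1 < A)
    (hΛ : ∀ a b : X, dist (Λ a) (Λ b) ≤ A * dist a b)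
    (v : X → ℝ) (Cv L : ℝ)
    (hv : ∀ x, |v x| ≤ Cv)
    (hL : ∀ x y, |v x - v y| ≤ L * dist x y)
    (d : ℝ) (hd : 1 < d) :
    ∃ u : X → ℝ,
      (∀ x, HasSum (fun n : ℕ => (d ^ n)⁻¹ * v (Λ^[n] x)) (u x)) ∧
      ∀ β : ℝ, 0 ≤ β → β ≤ 1 → β < Real.log d / Real.log A →
        ∃ C : ℝ, ∀ x y, |u x - u y| ≤ C * dist x y ^ β :=
  holder_series_general Λ A hA hΛ v Cv L hv hL d hd
end

section
/- Let V be a finite-dimensional real vector space equipped with a nondegenerate symmetric bilinear form Q of signature (1, n) (one positive direction). If c and c' are linearly independent vectors with Q(c,c) ≥ 0 and Q(c',c') ≥ 0, then Q(c,c') ≠ 0. -/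
/-- Let `V` be a finite-dimensional real vector space with a nondegenerate symmetric
bilinear form `Q` of signature `(1, n)`: there is a vector `e` with `Q e e > 0` such
that `Q` is negative definite on the `Q`-orthogonal complement of `e`. If `c, c'` are
linearly independent with `Q c c ≥ 0` and `Q c' c' ≥ 0`, then `Q c c' ≠ 0`. -/
theorem hodge_index_nonzero_product {V : Type*} [AddCommGroup V] [Module ℝ V]
    [FiniteDimensional ℝ V]
    (Q : V →ₗ[ℝ] V →ₗ[ℝ] ℝ)
    (hsymm : ∀ x y, Q x y = Q y x)
    (hnd : ∀ x, (∀ y, Q x y = 0) → x = 0)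
    (e : V) (he : 0 < Q e e)
    (hneg : ∀ v, Q e v = 0 → v ≠ 0 → Q v v < 0)
    (c c' : V) (hind : LinearIndependent ℝ ![c, c'])
    (hc : 0 ≤ Q c c) (hc' : 0 ≤ Q c' c') :
    Q c c' ≠ 0 := by
  intro h0
  have hcne : c ≠ 0 := hind.ne_zero 0
  have hc'ne : c' ≠ 0 := hind.ne_zero 1
  set a := Q e c with ha
  set b := Q e c' with hb
  have hane : a ≠ 0 := by
    intro haz
    have := hneg c haz hcne
    linarith
  have hbne : b ≠ 0 := by
    intro hbz
    have := hneg c' hbz hc'ne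
    linarith
  set u := b • c - a • c' with hu
  have hue : Q e u = 0 := by
    simp [hu, ha, hb, mul_comm]
  have hune : u ≠ 0 := by
    intro huz
    rcases LinearIndependent.pair_iff.1 hind b (-a) (by
      rw [neg_smul, ← sub_eq_add_neg, ← hu]; exact huz) with ⟨hb0, _⟩
    exact hbne hb0
  have := hneg u hue hune
  have hexp : Q u u = b * b * Q c c + a * a * Q c' c' := by
    simp only [hu, map_sub, map_smul, LinearMap.sub_apply, LinearMap.smul_apply,
      smul_eq_mul]
    rw [hsymm c' c, h0]
    ring
  nlinarith [mul_nonneg (mul_self_nonneg b) hc, mul_nonneg (mul_self_nonneg a) hc']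
end

section
/- Let V be a finite-dimensional real vector space with a symmetric bilinear form Q of signature (1, n), and let T : V → V be an invertible linear map preserving Q. Suppose c₊ and c₋ are linearly independent vectors with Q(c₊,c₊) = Q(c₋,c₋) = 0, Q(c₊,c₋) = 1, T(c₊) = d⁻¹ c₊ and T(c₋) = d c₋ for some d > 1. Then the subspace H := {c : Q(c,c₊) = Q(c,c₋) = 0} is T-invariant, Q is negative definite on H, V = ℝc₊ ⊕ ℝc₋ ⊕ H, and every eigenvalue of T restricted to H has modulus 1. -/
/-- Let `V` carry a symmetric bilinear form `Q` of signature `(1, n)` and `T` an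
invertible linear map preserving `Q`. Suppose `c₊, c₋` are linearly independent with
`Q c₊ c₊ = Q c₋ c₋ = 0`, `Q c₊ c₋ = 1`, `T c₊ = d⁻¹ c₊` and `T c₋ = d c₋` with `d > 1`.
Then `H := {c : Q c c₊ = Q c c₋ = 0}` is `T`-invariant, `Q` is negative definite on `H`,
`V = ℝc₊ ⊕ ℝc₋ ⊕ H`, and every (complex) eigenvalue of `T` on `H` has modulus `1`
(a complex eigenvalue `a + b i` is encoded by a pair `(x, y)` in `H` with
`T x = a x - b y`, `T y = b x + a y`). -/
theorem hyperbolic_action_structure {V : Type*} [AddCommGroup V] [Module ℝ V]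
    [FiniteDimensional ℝ V]
    (Q : V →ₗ[ℝ] V →ₗ[ℝ] ℝ)
    (hsymm : ∀ x y, Q x y = Q y x)
    (e : V) (he : 0 < Q e e)
    (hneg : ∀ v, Q e v = 0 → v ≠ 0 → Q v v < 0)
    (T : V →ₗ[ℝ] V) (hTbij : Function.Bijective T)
    (hTQ : ∀ x y, Q (T x) (T y) = Q x y)
    (cp cm : V) (hind : LinearIndependent ℝ ![cp, cm])
    (hcp : Q cp cp = 0) (hcm : Q cm cm = 0) (hpm : Q cp cm = 1)
    (d : ℝ) (hd : 1 < d)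
    (hTp : T cp = d⁻¹ • cp) (hTm : T cm = d • cm) :
    (∀ x, Q x cp = 0 → Q x cm = 0 → Q (T x) cp = 0 ∧ Q (T x) cm = 0) ∧
    (∀ x, Q x cp = 0 → Q x cm = 0 → x ≠ 0 → Q x x < 0) ∧
    (∀ v : V, ∃ s t : ℝ, ∃ h : V, Q h cp = 0 ∧ Q h cm = 0 ∧
      v = s • cp + t • cm + h ∧
      ∀ s' t' : ℝ, ∀ h' : V, Q h' cp = 0 → Q h' cm = 0 →
        v = s' • cp + t' • cm + h' → s' = s ∧ t' = t ∧ h' = h) ∧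
    (∀ a b : ℝ, ∀ x y : V, Q x cp = 0 → Q x cm = 0 → Q y cp = 0 → Q y cm = 0 →
      ¬(x = 0 ∧ y = 0) → T x = a • x - b • y → T y = b • x + a • y →
      a ^ 2 + b ^ 2 = 1) := by
  have hd0 : d ≠ 0 := by positivity
  have hQcmcp : Q cm cp = 1 := by rw [hsymm]; exact hpm
  -- general key lemma: if Q w w > 0 and v ⊥ w, v ≠ 0, then Q v v < 0
  have key : ∀ w v : V, 0 < Q w w → Q v w = 0 → v ≠ 0 → Q v v < 0 := by
    intro w v hw hvw hv
    by_contra hge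
    push_neg at hge
    by_cases hew : Q e w = 0
    · have hw0 : w ≠ 0 := by rintro rfl; simp at hw
      have := hneg w hew hw0
      linarith
    · set u := (Q e v) • w - (Q e w) • v with hu_def
      have heu : Q e u = 0 := by
        simp only [hu_def, map_sub, map_smul, smul_eq_mul]
        ring
      have hwv : Q w v = 0 := by rw [hsymm]; exact hvw
      have hu : u ≠ 0 := by
        intro h0
        have h1 : (Q e v) • w = (Q e w) • v := by rwa [sub_eq_zero] at h0
        have h2 : Q e v * Q w w = Q e w * Q v w := by
          have := congrArg (fun z => Q z w) h1
          simpa [map_smul, smul_eq_mul] using this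
        have h3 : Q e v = 0 := by
          have : Q e v * Q w w = 0 := by rw [h2, hvw]; ring
          exact (mul_eq_zero.mp this).resolve_right (ne_of_gt hw)
        have h4 : (Q e w) • v = 0 := by rw [← h1, h3, zero_smul]
        exact hv ((smul_eq_zero.mp h4).resolve_left hew)
      have huu := hneg u heu hu
      have hexp : Q u u = (Q e v) ^ 2 * Q w w + (Q e w) ^ 2 * Q v v := by
        simp only [hu_def, map_sub, map_smul, LinearMap.sub_apply, LinearMap.smul_apply,
          smul_eq_mul, hvw, hwv]
        ring
      nlinarith [sq_nonneg (Q e v), sq_nonneg (Q e w)]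
  have negdef : ∀ x, Q x cp = 0 → Q x cm = 0 → x ≠ 0 → Q x x < 0 := by
    intro x hxp hxm hx
    have hww : Q (cp + cm) (cp + cm) = 2 := by
      simp only [map_add, LinearMap.add_apply, hcp, hcm, hpm, hQcmcp]
      ring
    have hxw : Q x (cp + cm) = 0 := by
      simp only [map_add, hxp, hxm, add_zero]
    exact key (cp + cm) x (by rw [hww]; norm_num) hxw hx
  refine ⟨?_, negdef, ?_, ?_⟩
  · -- T-invariance of H
    intro x hxp hxm
    have hcp' : cp = d • T cp := by
      rw [hTp, smul_smul, mul_inv_cancel₀ hd0, one_smul]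
    have hcm' : cm = d⁻¹ • T cm := by
      rw [hTm, smul_smul, inv_mul_cancel₀ hd0, one_smul]
    constructor
    · rw [hcp', map_smul, hTQ, hxp, smul_zero]
    · rw [hcm', map_smul, hTQ, hxm, smul_zero]
  · -- decomposition
    intro v
    refine ⟨Q v cm, Q v cp, v - (Q v cm) • cp - (Q v cp) • cm, ?_, ?_, by abel, ?_⟩
    · simp only [map_sub, map_smul, LinearMap.sub_apply, LinearMap.smul_apply,
        smul_eq_mul, hcp, hQcmcp]
      ring
    · simp only [map_sub, map_smul, LinearMap.sub_apply, LinearMap.smul_apply,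
        smul_eq_mul, hcm, hpm]
      ring
    · intro s' t' h' hp' hm' heq
      have h1 : Q v cp = t' := by
        rw [heq]
        simp only [map_add, map_smul, LinearMap.add_apply, LinearMap.smul_apply,
          smul_eq_mul, hcp, hQcmcp, hp']
        ring
      have h2 : Q v cm = s' := by
        rw [heq]
        simp only [map_add, map_smul, LinearMap.add_apply, LinearMap.smul_apply,
          smul_eq_mul, hcm, hpm, hm']
        ring
      refine ⟨h2.symm, h1.symm, ?_⟩
      rw [h2, h1, heq]
      abel
  · -- eigenvalues on H have modulus 1
    intro a b x y hxp hxm hyp hym hne hTx hTy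
    have hyx : Q y x = Q x y := hsymm y x
    have e1 : a ^ 2 * Q x x - 2 * a * b * Q x y + b ^ 2 * Q y y = Q x x := by
      have h := hTQ x x
      rw [hTx] at h
      simp only [map_sub, map_smul, LinearMap.sub_apply, LinearMap.smul_apply,
        smul_eq_mul, hyx] at h
      linear_combination h
    have e2 : b ^ 2 * Q x x + 2 * a * b * Q x y + a ^ 2 * Q y y = Q y y := by
      have h := hTQ y y
      rw [hTy] at h
      simp only [map_add, map_smul, LinearMap.add_apply, LinearMap.smul_apply,
        smul_eq_mul, hyx] at h
      linear_combination h
    have hA : Q x x ≤ 0 := by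
      by_cases hx : x = 0
      · simp [hx]
      · exact le_of_lt (negdef x hxp hxm hx)
    have hB : Q y y ≤ 0 := by
      by_cases hy : y = 0
      · simp [hy]
      · exact le_of_lt (negdef y hyp hym hy)
    have hAB : Q x x + Q y y < 0 := by
      rcases not_and_or.mp hne with hx | hy
      · have := negdef x hxp hxm hx; linarith
      · have := negdef y hyp hym hy; linarith
    have hmul : (a ^ 2 + b ^ 2 - 1) * (Q x x + Q y y) = 0 := by
      linear_combination e1 + e2
    have := (mul_eq_zero.mp hmul).resolve_right (ne_of_lt hAB)
    linarith
end

section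
/- Let (X,d) be a compact metric space, f : X → X with Lipschitz constant at most M on a subset avoiding a set, and let ν be a measure with ‖ν‖_∞ ≤ 1 (bounded density). If νₙ := (fⁿ)_*ν is supported where f⁻ⁿ has C¹-norm at most Mⁿ, then ‖νₙ‖_∞ ≤ M^{4n}. Consequently, for functions vₙ with uniformly bounded DSH norms, |⟨νₙ, vₙ⟩| ≤ C(1 + 4n log⁺ M) = O(n). -/
/-!
An add-Haar measure on a finite-dimensional real space of dimension `d` is a constant multiple
of the `d`-dimensional Hausdorff measure, and a `K`-Lipschitz map multiplies the latter by at most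
`K ^ d`. On `ℂ × ℂ ≅ ℝ⁴` a map that is `Mⁿ`-Lipschitz thus enlarges volumes by at most `M^{4n}`,
which bounds the density of `νₙ`; the DSH estimate applied with `K = M^{4n}` then gives a bound
linear in `n`, because `log (M^{4n}) = 4n log M`.
-/

open MeasureTheory Module

theorem LipschitzWith.addHaar_image_le {E : Type*} [NormedAddCommGroup E] [NormedSpace ℝ E]
    [FiniteDimensional ℝ E] [MeasurableSpace E] [BorelSpace E] (μ : Measure E)
    [μ.IsAddHaarMeasure] {K : NNReal} {g : E → E} (hg : LipschitzWith K g) (s : Set E) :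
    μ (g '' s) ≤ (K : ENNReal) ^ finrank ℝ E * μ s := by
  set c := μ.addHaarScalarFactor μH[finrank ℝ E]
  have hμ : ∀ t, μ t = c * μH[finrank ℝ E] t := fun t => by
    conv_lhs => rw [μ.isAddLeftInvariant_eq_smul μH[finrank ℝ E]]
    rfl
  calc μ (g '' s) ≤ c * ((K : ENNReal) ^ (finrank ℝ E : ℝ) * μH[finrank ℝ E] s) := by
        rw [hμ]; gcongr; exact hg.hausdorffMeasure_image_le (Nat.cast_nonneg _) s
    _ = _ := by rw [ENNReal.rpow_natCast, hμ]; ring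

instance : (volume : Measure (ℂ × ℂ)).IsAddHaarMeasure :=
  inferInstanceAs ((volume : Measure ℂ).prod volume).IsAddHaarMeasure

theorem LipschitzWith.volume_image_le_prod_complex {K : NNReal} {g : ℂ × ℂ → ℂ × ℂ}
    (hg : LipschitzWith K g) (s : Set (ℂ × ℂ)) :
    volume (g '' s) ≤ (K : ENNReal) ^ 4 * volume s := by
  simpa using hg.addHaar_image_le volume s

theorem Real.max_log_pow_zero_eq_mul {x : ℝ} (k : ℕ) :
    max (Real.log (x ^ k)) 0 = k * max (Real.log x) 0 := by
  rw [Real.log_pow, mul_max_of_nonneg _ _ (Nat.cast_nonneg k), mul_zero]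

theorem pushforward_density_estimate_general (M : ℝ) (hM : 1 ≤ M)
    (g : ℕ → (ℂ × ℂ) → (ℂ × ℂ))
    (hg : ∀ n, LipschitzWith (Real.toNNReal (M ^ n)) (g n))
    (ν₀ : Measure (ℂ × ℂ)) (hν₀ : ∀ s : Set (ℂ × ℂ), ν₀ s ≤ volume s)
    (ν : ℕ → Measure (ℂ × ℂ))
    (hν : ∀ n, ∀ s : Set (ℂ × ℂ), ν n s = ν₀ (g n '' s))
    (C : ℝ) (v : ℕ → (ℂ × ℂ) → ℝ)
    (hDSH : ∀ n, ∀ σ : Measure (ℂ × ℂ), ∀ K : ℝ, 1 ≤ K →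
      (∀ s : Set (ℂ × ℂ), σ s ≤ ENNReal.ofReal K * volume s) →
      |∫ x, v n x ∂σ| ≤ C * (1 + max (Real.log K) 0)) :
    (∀ n, ∀ s : Set (ℂ × ℂ), ν n s ≤ ENNReal.ofReal (M ^ (4 * n)) * volume s) ∧
    ∀ n : ℕ, |∫ x, v n x ∂(ν n)| ≤ C * (1 + 4 * n * max (Real.log M) 0) := by
  have density : ∀ n, ∀ s : Set (ℂ × ℂ), ν n s ≤ ENNReal.ofReal (M ^ (4 * n)) * volume s := by
    intro n s
    have hpow : ENNReal.ofReal (M ^ (4 * n)) = (Real.toNNReal (M ^ n) : ENNReal) ^ 4 := by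
      rw [mul_comm, pow_mul, ENNReal.ofReal_pow (pow_nonneg (zero_le_one.trans hM) n)]
      rfl
    calc ν n s = ν₀ (g n '' s) := hν n s
      _ ≤ volume (g n '' s) := hν₀ _
      _ ≤ _ := hpow ▸ (hg n).volume_image_le_prod_complex s
  refine ⟨density, fun n => ?_⟩
  calc |∫ x, v n x ∂(ν n)| ≤ C * (1 + max (Real.log (M ^ (4 * n))) 0) :=
        hDSH n (ν n) _ (one_le_pow₀ hM) (density n)
    _ = C * (1 + 4 * n * max (Real.log M) 0) := by
        rw [Real.max_log_pow_zero_eq_mul]; push_cast; rfl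

/-- Push-forward density estimate: if `ν₀` has density bounded by `1` with respect to
Lebesgue measure on `ℂ² ≅ ℝ⁴`, and `νₙ(s) = ν₀(gₙ(s))` where `gₙ` (playing the role
of `f⁻ⁿ`) is Lipschitz with constant `Mⁿ`, then `νₙ` has density bounded by `M^{4n}`.
Consequently, for functions `vₙ` with uniformly bounded DSH norms (i.e. satisfying the
exponential estimate of Corollary 3.13 against measures of bounded density),
`|⟨νₙ, vₙ⟩| ≤ C (1 + 4 n log⁺ M) = O(n)`. -/
theorem pushforward_density_estimate (M : ℝ) (hM : 1 ≤ M)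
    (g : ℕ → (ℂ × ℂ) → (ℂ × ℂ))
    (hg : ∀ n, LipschitzWith (Real.toNNReal (M ^ n)) (g n))
    (ν₀ : Measure (ℂ × ℂ)) (hν₀ : ∀ s : Set (ℂ × ℂ), ν₀ s ≤ volume s)
    (ν : ℕ → Measure (ℂ × ℂ))
    (hν : ∀ n, ∀ s : Set (ℂ × ℂ), ν n s = ν₀ (g n '' s))
    (C : ℝ) (hC : 0 < C) (v : ℕ → (ℂ × ℂ) → ℝ)
    (hDSH : ∀ n, ∀ σ : Measure (ℂ × ℂ), ∀ K : ℝ, 1 ≤ K →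
      (∀ s : Set (ℂ × ℂ), σ s ≤ ENNReal.ofReal K * volume s) →
      |∫ x, v n x ∂σ| ≤ C * (1 + max (Real.log K) 0)) :
    (∀ n, ∀ s : Set (ℂ × ℂ), ν n s ≤ ENNReal.ofReal (M ^ (4 * n)) * volume s) ∧
    ∀ n : ℕ, |∫ x, v n x ∂(ν n)| ≤ C * (1 + 4 * n * max (Real.log M) 0) :=
  pushforward_density_estimate_general M hM g hg ν₀ hν₀ ν hν C v hDSH
end
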